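/- arXiv:1505.04966 — 3 statements merged into one kernel-verified Lean document; each statement's English description precedes it below -/
import Mathlib

section
/- Suppose the regularizer vanishes (Ω(β) = 0) and the constant function 1 lies in the linear span of the basis functions φ₁, …, φ_m. Then the optimal value of the constrained problem (P1') is at most the optimal value of the unconstrained centered problem (P2'): if β₁ minimizes G₁(β) = Σ_{i=1}^n ( y_i − Σ_j Σ_k β_{jk} φ_k(X_{ij}) )² over all β satisfying the centering constraints Σ_i Σ_k β_{jk} φ_k(X_{ij}) = 0 for every j, and β₂ minimizes G₂(β) = Σ_{i=1}^n ( y_i − Σ_j Σ_k β_{jk} ψ_{jk}(X_{ij}) )² over all β, then G₁(β₁) ≤ G₂(β₂). -/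
/-!
Given any coefficients `β₂` of the centered problem, subtract from the `j`-th row the
constant `d_j = Σ_k β₂ j k φ̄_{jk}` expressed in the basis through `c`. The resulting `β` fits
exactly the same values as `β₂` does with the centered basis, and these fitted values have zero
sum over the sample, so `β` is feasible for the constrained problem and `G₁ β₁ ≤ G₁ β = G₂ β₂`.
-/

open Finset

lemma sum_sub_mean_eq_zero {ι : Type*} [Fintype ι] (f : ι → ℝ) :
    ∑ i, (f i - (1 / (Fintype.card ι : ℝ)) * ∑ i', f i') = 0 := by
  rcases isEmpty_or_nonempty ι with _ | _
  · exact Fintype.sum_empty _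
  · rw [sum_sub_distrib, sum_const, card_univ, nsmul_eq_mul, ← mul_assoc,
      mul_one_div_cancel (by positivity), one_mul, sub_self]

section CenteredBasis

variable {ι κ : Type*} [Fintype ι] [Fintype κ] {φ : κ → ℝ → ℝ} {c : κ → ℝ}

lemma sum_sub_mul_mul_eq_sub (hc : ∀ x, ∑ k, c k * φ k x = 1) (b : κ → ℝ) (a x : ℝ) :
    ∑ k, (b k - a * c k) * φ k x = ∑ k, b k * φ k x - a := by
  simp only [sub_mul, sum_sub_distrib, mul_assoc, ← mul_sum, hc, mul_one]

lemma sum_shifted_mul_eq_sum_mul_centered (hc : ∀ x, ∑ k, c k * φ k x = 1) (b : κ → ℝ)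
    (Z : ι → ℝ) (i : ι) :
    ∑ k, (b k - (∑ k', b k' * ((1 / (Fintype.card ι : ℝ)) * ∑ i', φ k' (Z i'))) * c k) *
        φ k (Z i) =
      ∑ k, b k * (φ k (Z i) - (1 / (Fintype.card ι : ℝ)) * ∑ i', φ k (Z i')) := by
  rw [sum_sub_mul_mul_eq_sub hc, ← sum_sub_distrib]
  simp only [mul_sub]

lemma sum_sum_mul_centered_eq_zero (b : κ → ℝ) (Z : ι → ℝ) :
    ∑ i, ∑ k, b k * (φ k (Z i) - (1 / (Fintype.card ι : ℝ)) * ∑ i', φ k (Z i')) = 0 := by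
  rw [sum_comm]
  exact sum_eq_zero fun k _ => by rw [← mul_sum, sum_sub_mean_eq_zero, mul_zero]

end CenteredBasis

theorem stmt_6_general (n p m : ℕ)
    (X : Fin n → Fin p → ℝ) (y : Fin n → ℝ) (φ : Fin m → ℝ → ℝ)
    (c : Fin m → ℝ) (hc : ∀ x : ℝ, ∑ k, c k * φ k x = 1)
    (β₁ β₂ : Fin p → Fin m → ℝ)
    (hmin₁ : ∀ β : Fin p → Fin m → ℝ,
      (∀ j : Fin p, ∑ i, ∑ k, β j k * φ k (X i j) = 0) →
      ∑ i, (y i - ∑ j, ∑ k, β₁ j k * φ k (X i j)) ^ 2 ≤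
      ∑ i, (y i - ∑ j, ∑ k, β j k * φ k (X i j)) ^ 2) :
    ∑ i, (y i - ∑ j, ∑ k, β₁ j k * φ k (X i j)) ^ 2 ≤
    ∑ i, (y i - ∑ j, ∑ k, β₂ j k *
        (φ k (X i j) - (1 / (n : ℝ)) * ∑ i', φ k (X i' j))) ^ 2 := by
  set β : Fin p → Fin m → ℝ := fun j k =>
    β₂ j k - (∑ k', β₂ j k' * ((1 / (n : ℝ)) * ∑ i', φ k' (X i' j))) * c k
  have hfit : ∀ i j, ∑ k, β j k * φ k (X i j) =
      ∑ k, β₂ j k * (φ k (X i j) - (1 / (n : ℝ)) * ∑ i', φ k (X i' j)) := fun i j => by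
    simpa only [β, Fintype.card_fin] using
      sum_shifted_mul_eq_sum_mul_centered hc (β₂ j) (fun i' => X i' j) i
  have hfeas : ∀ j, ∑ i, ∑ k, β j k * φ k (X i j) = 0 := fun j => by
    simp_rw [hfit]
    simpa only [Fintype.card_fin] using sum_sum_mul_centered_eq_zero (β₂ j) (fun i' => X i' j)
  calc ∑ i, (y i - ∑ j, ∑ k, β₁ j k * φ k (X i j)) ^ 2
      ≤ ∑ i, (y i - ∑ j, ∑ k, β j k * φ k (X i j)) ^ 2 := hmin₁ β hfeas
    _ = _ := by simp_rw [hfit]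

/-- With no regularizer and assuming the constant function 1 lies
in the span of the basis, the optimal value of the constrained problem (P1')
is at most the optimal value of the unconstrained centered problem (P2'). -/
theorem stmt_6 (n p m : ℕ) (hn : 0 < n)
    (X : Fin n → Fin p → ℝ) (y : Fin n → ℝ) (φ : Fin m → ℝ → ℝ)
    (c : Fin m → ℝ) (hc : ∀ x : ℝ, ∑ k, c k * φ k x = 1)
    (β₁ β₂ : Fin p → Fin m → ℝ)
    (hfeas : ∀ j : Fin p, ∑ i, ∑ k, β₁ j k * φ k (X i j) = 0)
    (hmin₁ : ∀ β : Fin p → Fin m → ℝ,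
      (∀ j : Fin p, ∑ i, ∑ k, β j k * φ k (X i j) = 0) →
      ∑ i, (y i - ∑ j, ∑ k, β₁ j k * φ k (X i j)) ^ 2 ≤
      ∑ i, (y i - ∑ j, ∑ k, β j k * φ k (X i j)) ^ 2)
    (hmin₂ : ∀ β : Fin p → Fin m → ℝ,
      ∑ i, (y i - ∑ j, ∑ k, β₂ j k *
          (φ k (X i j) - (1 / (n : ℝ)) * ∑ i', φ k (X i' j))) ^ 2 ≤
      ∑ i, (y i - ∑ j, ∑ k, β j k *
          (φ k (X i j) - (1 / (n : ℝ)) * ∑ i', φ k (X i' j))) ^ 2) :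
    ∑ i, (y i - ∑ j, ∑ k, β₁ j k * φ k (X i j)) ^ 2 ≤
    ∑ i, (y i - ∑ j, ∑ k, β₂ j k *
        (φ k (X i j) - (1 / (n : ℝ)) * ∑ i', φ k (X i' j))) ^ 2 :=
  stmt_6_general n p m X y φ c hc β₁ β₂ hmin₁
end

section
/- Suppose the regularizer vanishes (Ω(β) = 0) and the constant function 1 lies in the linear span of the basis functions φ₁, …, φ_m. Then the constrained problem (P1') and the unconstrained centered problem (P2') have equal optimal values: if β₁ minimizes G₁(β) = Σ_{i=1}^n ( y_i − Σ_j Σ_k β_{jk} φ_k(X_{ij}) )² over all β satisfying the centering constraints Σ_i Σ_k β_{jk} φ_k(X_{ij}) = 0 for every j, and β₂ minimizes G₂(β) = Σ_{i=1}^n ( y_i − Σ_j Σ_k β_{jk} ψ_{jk}(X_{ij}) )² over all β, then G₁(β₁) = G₂(β₂). -/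
/-- With no regularizer and assuming the constant function 1 lies
in the span of the basis, the constrained problem (P1') and the unconstrained
centered problem (P2') have equal optimal values. -/
theorem stmt_7 (n p m : ℕ) (hn : 0 < n)
    (X : Fin n → Fin p → ℝ) (y : Fin n → ℝ) (φ : Fin m → ℝ → ℝ)
    (c : Fin m → ℝ) (hc : ∀ x : ℝ, ∑ k, c k * φ k x = 1)
    (β₁ β₂ : Fin p → Fin m → ℝ)
    (hfeas : ∀ j : Fin p, ∑ i, ∑ k, β₁ j k * φ k (X i j) = 0)
    (hmin₁ : ∀ β : Fin p → Fin m → ℝ,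
      (∀ j : Fin p, ∑ i, ∑ k, β j k * φ k (X i j) = 0) →
      ∑ i, (y i - ∑ j, ∑ k, β₁ j k * φ k (X i j)) ^ 2 ≤
      ∑ i, (y i - ∑ j, ∑ k, β j k * φ k (X i j)) ^ 2)
    (hmin₂ : ∀ β : Fin p → Fin m → ℝ,
      ∑ i, (y i - ∑ j, ∑ k, β₂ j k *
          (φ k (X i j) - (1 / (n : ℝ)) * ∑ i', φ k (X i' j))) ^ 2 ≤
      ∑ i, (y i - ∑ j, ∑ k, β j k *
          (φ k (X i j) - (1 / (n : ℝ)) * ∑ i', φ k (X i' j))) ^ 2) :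
    ∑ i, (y i - ∑ j, ∑ k, β₁ j k * φ k (X i j)) ^ 2 =
    ∑ i, (y i - ∑ j, ∑ k, β₂ j k *
        (φ k (X i j) - (1 / (n : ℝ)) * ∑ i', φ k (X i' j))) ^ 2 := by
  have hn' : (n : ℝ) ≠ 0 := Nat.cast_ne_zero.mpr hn.ne'
  set a : Fin p → Fin m → ℝ := fun j k => (1 / (n : ℝ)) * ∑ i', φ k (X i' j) with ha
  set A : Fin p → ℝ := fun j => ∑ k, β₂ j k * a j k with hA
  set β : Fin p → Fin m → ℝ := fun j k => β₂ j k - A j * c k with hβ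
  -- pointwise: β fits the same values in the φ basis as β₂ in the centered basis
  have key : ∀ i j, ∑ k, β j k * φ k (X i j)
      = ∑ k, β₂ j k * (φ k (X i j) - a j k) := by
    intro i j
    have h1 : ∑ k, β j k * φ k (X i j)
        = (∑ k, β₂ j k * φ k (X i j)) - A j * ∑ k, c k * φ k (X i j) := by
      rw [Finset.mul_sum, ← Finset.sum_sub_distrib]
      exact Finset.sum_congr rfl fun k _ => by simp [hβ]; ring
    have h2 : ∑ k, β₂ j k * (φ k (X i j) - a j k)
        = (∑ k, β₂ j k * φ k (X i j)) - A j := by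
      simp only [mul_sub, Finset.sum_sub_distrib, hA]
    rw [h1, hc, mul_one, h2]
  -- β is feasible for problem 1
  have hfeas' : ∀ j, ∑ i, ∑ k, β j k * φ k (X i j) = 0 := by
    intro j
    simp only [key]
    rw [Finset.sum_comm]
    refine Finset.sum_eq_zero fun k _ => ?_
    rw [← Finset.mul_sum, Finset.sum_sub_distrib, Finset.sum_const,
      Finset.card_univ, Fintype.card_fin, nsmul_eq_mul]
    have : (n : ℝ) * a j k = ∑ i, φ k (X i j) := by
      simp only [ha]; field_simp
    rw [this, sub_self, mul_zero]
  have le1 : ∑ i, (y i - ∑ j, ∑ k, β₁ j k * φ k (X i j)) ^ 2 ≤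
      ∑ i, (y i - ∑ j, ∑ k, β₂ j k * (φ k (X i j) - a j k)) ^ 2 := by
    refine (hmin₁ β hfeas').trans_eq ?_
    exact Finset.sum_congr rfl fun i _ => by rw [Finset.sum_congr rfl fun j _ => key i j]
  have le2 : ∑ i, (y i - ∑ j, ∑ k, β₂ j k * (φ k (X i j) - a j k)) ^ 2 ≤
      ∑ i, (y i - ∑ j, ∑ k, β₁ j k * φ k (X i j)) ^ 2 := by
    refine (hmin₂ β₁).trans_eq ?_
    refine Finset.sum_congr rfl fun i _ => ?_
    congr 1
    congr 1
    refine Finset.sum_congr rfl fun j _ => ?_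
    have h0 : ∑ i', ∑ k, β₁ j k * φ k (X i' j) = 0 := hfeas j
    have : ∑ k, β₁ j k * (φ k (X i j) - a j k)
        = (∑ k, β₁ j k * φ k (X i j))
          - (1 / (n : ℝ)) * ∑ i', ∑ k, β₁ j k * φ k (X i' j) := by
      simp only [ha, mul_sub, Finset.sum_sub_distrib]
      congr 1
      calc ∑ k, β₁ j k * ((1 / (n : ℝ)) * ∑ i', φ k (X i' j))
          = ∑ k, ∑ i', (1 / (n : ℝ)) * (β₁ j k * φ k (X i' j)) := by
            refine Finset.sum_congr rfl fun k _ => ?_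
            rw [Finset.mul_sum, Finset.mul_sum]
            exact Finset.sum_congr rfl fun i' _ => by ring
        _ = ∑ i', ∑ k, (1 / (n : ℝ)) * (β₁ j k * φ k (X i' j)) := Finset.sum_comm
        _ = (1 / (n : ℝ)) * ∑ i', ∑ k, β₁ j k * φ k (X i' j) := by
            rw [Finset.mul_sum]
            exact Finset.sum_congr rfl fun i' _ => (Finset.mul_sum _ _ _).symm
    rw [this, h0, mul_zero, sub_zero]
  exact le_antisymm le1 le2
end

section
/- Suppose the regularizer depends only on the transfer functions, via a functional Ω : (Fin p → (ℝ → ℝ)) → ℝ, with Ω₁(β) = Ω(j ↦ (x ↦ Σ_{k=1}^m β_{jk} φ_k(x))) and Ω₂(β) = Ω(j ↦ (x ↦ Σ_{k=1}^m β_{jk} ψ_{jk}(x))). Assume the constant function 1 lies in the linear span of φ₁, …, φ_m, AND that Ω is invariant under subtracting constants from each component function, i.e. Ω(j ↦ (x ↦ g_j(x) − a_j)) = Ω(g) for all g and all constants a : Fin p → ℝ. If β₁ minimizes F₁(β) = Σ_{i=1}^n ( y_i − Σ_j Σ_k β_{jk} φ_k(X_{ij}) )² + Ω₁(β) over all β satisfying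 the centering constraints Σ_i Σ_k β_{jk} φ_k(X_{ij}) = 0 for every j, and β₂ minimizes F₂(β) = Σ_{i=1}^n ( y_i − Σ_j Σ_k β_{jk} ψ_{jk}(X_{ij}) )² + Ω₂(β) over all β, then F₁(β₁) = F₂(β₂). -/
/-- If the regularizer depends only on the transfer functions
(via a functional `Ω` on `Fin p → (ℝ → ℝ)`), the constant function 1 lies in
the span of the basis, and `Ω` is invariant under subtracting constants from
each component function, then the constrained problem (P1') and the
unconstrained centered problem (P2') have equal optimal values. -/
theorem stmt_9 (n p m : ℕ) (hn : 0 < n)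
    (X : Fin n → Fin p → ℝ) (y : Fin n → ℝ) (φ : Fin m → ℝ → ℝ)
    (Ω : (Fin p → ℝ → ℝ) → ℝ)
    (c : Fin m → ℝ) (hc : ∀ x : ℝ, ∑ k, c k * φ k x = 1)
    (hinv : ∀ (g : Fin p → ℝ → ℝ) (a : Fin p → ℝ),
      Ω (fun j => fun x => g j x - a j) = Ω g)
    (β₁ β₂ : Fin p → Fin m → ℝ)
    (hfeas : ∀ j : Fin p, ∑ i, ∑ k, β₁ j k * φ k (X i j) = 0)
    (hmin₁ : ∀ β : Fin p → Fin m → ℝ,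
      (∀ j : Fin p, ∑ i, ∑ k, β j k * φ k (X i j) = 0) →
      (∑ i, (y i - ∑ j, ∑ k, β₁ j k * φ k (X i j)) ^ 2) +
        Ω (fun j => fun x => ∑ k, β₁ j k * φ k x) ≤
      (∑ i, (y i - ∑ j, ∑ k, β j k * φ k (X i j)) ^ 2) +
        Ω (fun j => fun x => ∑ k, β j k * φ k x))
    (hmin₂ : ∀ β : Fin p → Fin m → ℝ,
      (∑ i, (y i - ∑ j, ∑ k, β₂ j k *
          (φ k (X i j) - (1 / (n : ℝ)) * ∑ i', φ k (X i' j))) ^ 2) +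
        Ω (fun j => fun x => ∑ k, β₂ j k *
          (φ k x - (1 / (n : ℝ)) * ∑ i', φ k (X i' j))) ≤
      (∑ i, (y i - ∑ j, ∑ k, β j k *
          (φ k (X i j) - (1 / (n : ℝ)) * ∑ i', φ k (X i' j))) ^ 2) +
        Ω (fun j => fun x => ∑ k, β j k *
          (φ k x - (1 / (n : ℝ)) * ∑ i', φ k (X i' j)))) :
    (∑ i, (y i - ∑ j, ∑ k, β₁ j k * φ k (X i j)) ^ 2) +
      Ω (fun j => fun x => ∑ k, β₁ j k * φ k x) =
    (∑ i, (y i - ∑ j, ∑ k, β₂ j k *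
        (φ k (X i j) - (1 / (n : ℝ)) * ∑ i', φ k (X i' j))) ^ 2) +
      Ω (fun j => fun x => ∑ k, β₂ j k *
        (φ k x - (1 / (n : ℝ)) * ∑ i', φ k (X i' j))) := by
  have hnne : (n : ℝ) ≠ 0 := Nat.cast_ne_zero.mpr hn.ne'
  -- Step 1: for β₁, centered transfer = raw transfer (by feasibility)
  have h1 : ∀ (j : Fin p) (x : ℝ),
      ∑ k, β₁ j k * (φ k x - (1 / (n : ℝ)) * ∑ i', φ k (X i' j))
        = ∑ k, β₁ j k * φ k x := by
    intro j x
    have hz : ∑ k, β₁ j k * ∑ i', φ k (X i' j) = 0 := by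
      have := hfeas j
      rw [Finset.sum_comm] at this
      simpa [Finset.mul_sum] using this
    have : ∑ k, β₁ j k * ((1 / (n : ℝ)) * ∑ i', φ k (X i' j)) = 0 := by
      have : ∑ k, β₁ j k * ((1 / (n : ℝ)) * ∑ i', φ k (X i' j))
          = (1 / (n : ℝ)) * ∑ k, β₁ j k * ∑ i', φ k (X i' j) := by
        rw [Finset.mul_sum]; congr 1; ext k; ring
      rw [this, hz, mul_zero]
    calc ∑ k, β₁ j k * (φ k x - (1 / (n : ℝ)) * ∑ i', φ k (X i' j))
        = (∑ k, β₁ j k * φ k x)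
          - ∑ k, β₁ j k * ((1 / (n : ℝ)) * ∑ i', φ k (X i' j)) := by
          rw [← Finset.sum_sub_distrib]; congr 1; ext k; ring
      _ = ∑ k, β₁ j k * φ k x := by rw [this, sub_zero]
  -- Step 2: centered version of β₂
  set a : Fin p → ℝ := fun j => ∑ l, β₂ j l * ((1 / (n : ℝ)) * ∑ i', φ l (X i' j)) with ha
  set βc : Fin p → Fin m → ℝ := fun j k => β₂ j k - a j * c k with hβc
  have h2 : ∀ (j : Fin p) (x : ℝ),
      ∑ k, βc j k * φ k x
        = ∑ k, β₂ j k * (φ k x - (1 / (n : ℝ)) * ∑ i', φ k (X i' j)) := by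
    intro j x
    have hL : ∑ k, βc j k * φ k x
        = (∑ k, β₂ j k * φ k x) - a j * ∑ k, c k * φ k x := by
      rw [Finset.mul_sum, ← Finset.sum_sub_distrib]; congr 1; ext k; ring
    have hR : ∑ k, β₂ j k * (φ k x - (1 / (n : ℝ)) * ∑ i', φ k (X i' j))
        = (∑ k, β₂ j k * φ k x) - a j := by
      rw [ha, ← Finset.sum_sub_distrib]; congr 1; ext k; ring
    rw [hL, hR, hc, mul_one]
  have hfeasc : ∀ j : Fin p, ∑ i, ∑ k, βc j k * φ k (X i j) = 0 := by
    intro j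
    have : ∀ i, ∑ k, βc j k * φ k (X i j)
        = ∑ k, β₂ j k * (φ k (X i j) - (1 / (n : ℝ)) * ∑ i', φ k (X i' j)) :=
      fun i => h2 j (X i j)
    rw [Finset.sum_congr rfl (fun i _ => this i), Finset.sum_comm]
    apply Finset.sum_eq_zero
    intro k _
    rw [← Finset.mul_sum, Finset.sum_sub_distrib, Finset.sum_const, Finset.card_fin,
      nsmul_eq_mul]
    have : (n : ℝ) * ((1 / (n : ℝ)) * ∑ i', φ k (X i' j)) = ∑ i', φ k (X i' j) := by
      field_simp
    rw [this, sub_self, mul_zero]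
  -- Combine
  apply le_antisymm
  · have := hmin₁ βc hfeasc
    calc (∑ i, (y i - ∑ j, ∑ k, β₁ j k * φ k (X i j)) ^ 2) +
          Ω (fun j => fun x => ∑ k, β₁ j k * φ k x)
        ≤ (∑ i, (y i - ∑ j, ∑ k, βc j k * φ k (X i j)) ^ 2) +
          Ω (fun j => fun x => ∑ k, βc j k * φ k x) := this
      _ = _ := by simp only [h2]
  · have := hmin₂ β₁
    calc (∑ i, (y i - ∑ j, ∑ k, β₂ j k *
            (φ k (X i j) - (1 / (n : ℝ)) * ∑ i', φ k (X i' j))) ^ 2) +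
          Ω (fun j => fun x => ∑ k, β₂ j k *
            (φ k x - (1 / (n : ℝ)) * ∑ i', φ k (X i' j)))
        ≤ (∑ i, (y i - ∑ j, ∑ k, β₁ j k *
            (φ k (X i j) - (1 / (n : ℝ)) * ∑ i', φ k (X i' j))) ^ 2) +
          Ω (fun j => fun x => ∑ k, β₁ j k *
            (φ k x - (1 / (n : ℝ)) * ∑ i', φ k (X i' j))) := this
      _ = _ := by simp only [h1]
end
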